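/- With t_j as above (t_1 = 1 - e^{-2}, t_{j+1} = t_j + (1-t_j)|log(1-t_j)|^{-1}), the quantity |t_{j+1} - t_j| / |1 - t_j t_{j+1}| tends to 0 as j → ∞. -/

import Mathlib

/-!
Write `L_j = -log (1 - t_j)`. The recursion reads `1 - t_{j+1} = (1 - t_j) (1 - 1/L_j)`, so
`t_{j+1} - t_j = (1 - t_j)/L_j` while `1 - t_j t_{j+1} ≥ 1 - t_j`: the ratio is at most `1/L_j`.
Taking logarithms and using `log (1 - 1/L) ≤ -1/L` gives `L_{j+1} ≥ L_j + 1/L_j`, hence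
`L_j² ≥ L_1² + 2(j - 1)` and `L_j → ∞`.
-/

open Filter Real

noncomputable def logStep (x : ℝ) : ℝ := x + (1 - x) * |log (1 - x)|⁻¹

section logStep

variable {x : ℝ}

lemma one_sub_logStep (hL : 0 < -log (1 - x)) :
    1 - logStep x = (1 - x) * (1 - (-log (1 - x))⁻¹) := by
  rw [logStep, abs_of_neg (neg_pos.mp hL)]
  ring

lemma le_neg_log_one_sub_logStep (hx : x < 1) (hL : 1 < -log (1 - x)) :
    -log (1 - x) + (-log (1 - x))⁻¹ ≤ -log (1 - logStep x) := by
  have hinv : (-log (1 - x))⁻¹ < 1 := inv_lt_one_of_one_lt₀ hL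
  have hlog : log (1 - (-log (1 - x))⁻¹) ≤ -(-log (1 - x))⁻¹ := by
    linarith [log_le_sub_one_of_pos (sub_pos.mpr hinv)]
  rw [one_sub_logStep (by linarith), log_mul (by linarith) (by linarith)]
  linarith

lemma logStep_mem_Ico (hx : x ∈ Set.Ico 0 1) (hL : 1 < -log (1 - x)) :
    logStep x ∈ Set.Ico 0 1 := by
  have hinv : (-log (1 - x))⁻¹ < 1 := inv_lt_one_of_one_lt₀ hL
  have hpos : 0 < 1 - logStep x := by
    rw [one_sub_logStep (by linarith)]
    exact mul_pos (by linarith [hx.2]) (by linarith)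
  have hle : x ≤ logStep x :=
    le_add_of_nonneg_right (mul_nonneg (by linarith [hx.2]) (inv_nonneg.mpr (abs_nonneg _)))
  exact ⟨hx.1.trans hle, by linarith⟩

lemma pseudohyperbolic_logStep_le (hx : x ∈ Set.Ico 0 1) (hL : 1 < -log (1 - x)) :
    |logStep x - x| / |1 - x * logStep x| ≤ (-log (1 - x))⁻¹ := by
  have hy := logStep_mem_Ico hx hL
  have hdiff : logStep x - x = (1 - x) * (-log (1 - x))⁻¹ := by
    rw [logStep, abs_of_neg (by linarith)]
    ring
  -- `1 - x y` exceeds `1 - x` by `x (1 - y) ≥ 0`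
  have hden : 1 - x ≤ 1 - x * logStep x := by nlinarith [hx.1, hy.2]
  have hinv : 0 ≤ (-log (1 - x))⁻¹ := by positivity
  rw [hdiff, abs_of_nonneg (mul_nonneg (by linarith [hx.2]) hinv),
    abs_of_pos (by linarith [hx.2])]
  refine div_le_of_le_mul₀ (by linarith [hx.2]) hinv ?_
  rw [mul_comm]
  exact mul_le_mul_of_nonneg_left hden hinv

end logStep

theorem tendsto_atTop_of_add_inv_le {a : ℕ → ℝ} (h0 : 0 < a 0)
    (h : ∀ n, a n + (a n)⁻¹ ≤ a (n + 1)) : Tendsto a atTop atTop := by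
  have hpos : ∀ n, 0 < a n := by
    intro n
    induction n with
    | zero => exact h0
    | succ n ih => exact lt_of_lt_of_le (by positivity) (h n)
  -- squaring `a (n+1) ≥ a n + (a n)⁻¹` gives `a (n+1)^2 ≥ a n^2 + 2`
  have hsq : ∀ n : ℕ, 2 * (n : ℝ) ≤ a n ^ 2 := by
    intro n
    induction n with
    | zero => simpa using sq_nonneg (a 0)
    | succ n ih =>
      have hmul : a n * (a n)⁻¹ = 1 := mul_inv_cancel₀ (hpos n).ne'
      have := pow_le_pow_left₀ (add_pos (hpos n) (inv_pos.mpr (hpos n))).le (h n) 2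
      push_cast
      nlinarith [sq_nonneg (a n)⁻¹]
  refine tendsto_atTop_mono (fun n => ?_) (tendsto_sqrt_atTop.comp
    (tendsto_natCast_atTop_atTop.const_mul_atTop two_pos))
  exact sqrt_le_iff.mpr ⟨(hpos n).le, hsq n⟩

/-- with t₁ = 1 - e⁻², t_{j+1} = t_j + (1-t_j)|log(1-t_j)|⁻¹, the
quantity |t_{j+1} - t_j| / |1 - t_j t_{j+1}| tends to 0. -/
theorem pseudohyperbolic_ratio_tendsto_zero (t : ℕ → ℝ)
    (h1 : t 1 = 1 - Real.exp (-2))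
    (hrec : ∀ j ≥ 1, t (j + 1) = t j + (1 - t j) * |Real.log (1 - t j)|⁻¹) :
    Tendsto (fun j => |t (j + 1) - t j| / |1 - t j * t (j + 1)|) atTop (nhds 0) := by
  have hstep : ∀ j ≥ 1, t (j + 1) = logStep (t j) := hrec
  have hmem : ∀ j ≥ 1, t j ∈ Set.Ico 0 1 ∧ 1 < -log (1 - t j) := by
    intro j hj
    induction j, hj using Nat.le_induction with
    | base =>
      have he : exp (-2) < 1 := exp_lt_one_iff.mpr (by norm_num)
      rw [h1, sub_sub_cancel, log_exp]
      exact ⟨⟨by linarith, by linarith [exp_pos (-2)]⟩, by norm_num⟩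
    | succ j hj ih =>
      rw [hstep j hj]
      exact ⟨logStep_mem_Ico ih.1 ih.2,
        ih.2.trans ((lt_add_of_pos_right _ (inv_pos.mpr (one_pos.trans ih.2))).trans_le
          (le_neg_log_one_sub_logStep ih.1.2 ih.2))⟩
  have hlog : Tendsto (fun j => -log (1 - t j)) atTop atTop := by
    rw [← tendsto_add_atTop_iff_nat 1]
    refine tendsto_atTop_of_add_inv_le (by linarith [(hmem 1 le_rfl).2]) fun n => ?_
    rw [hstep (n + 1) le_add_self]
    exact le_neg_log_one_sub_logStep (hmem (n + 1) le_add_self).1.2 (hmem (n + 1) le_add_self).2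
  refine squeeze_zero' (Eventually.of_forall fun j => by positivity) ?_ hlog.inv_tendsto_atTop
  filter_upwards [eventually_ge_atTop 1] with j hj
  rw [hstep j hj]
  exact pseudohyperbolic_logStep_le (hmem j hj).1 (hmem j hj).2
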